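/- arXiv:math/0307097 — 5 statements merged into one kernel-verified Lean document; each statement's English description precedes it below -/
import Mathlib

section
/- Let p be an odd prime and n ≥ 1. If K is a closed subgroup of GL_n(ℤ_p) whose image under the reduction map GL_n(ℤ_p) → GL_n(ℤ/p²ℤ) is all of GL_n(ℤ/p²ℤ), then K = GL_n(ℤ_p). (Lemma 2.2.1(a) instantiated at the reductive group scheme G = GL_n over ℤ_p = W(𝔽_p).) -/
/-!
For odd `p` and `m ≥ 1` the binomial theorem gives `(1 + p^m A)^p ≡ 1 + p^(m+1) A (mod p^(m+2))`
(for `p = 2`, `m = 1` the last term `p^(mp) A^p` spoils this). So if every element of the kernel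
`Γ_m` of reduction mod `p^m` agrees modulo `p^(m+1)` with an element of `K`, taking `p`-th powers
gives the same for `Γ_(m+1)` modulo `p^(m+2)`; the case `m = 1` is the surjectivity mod `p²`.
By induction `K` surjects onto every `GL_n(ℤ/p^m)`, so it is dense, and being closed it is all
of `GL_n(ℤ_p)`.
-/

open Filter Topology Matrix PadicInt

theorem Nat.pow_dvd_pow_mul_choose {p m k : ℕ} (hp : p.Prime) (hodd : Odd p) (hm : 1 ≤ m)
    (hk : 2 ≤ k) (hkp : k ≤ p) : p ^ (m + 2) ∣ p ^ (m * k) * p.choose k := by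
  have hp3 : 3 ≤ p := by
    have : p ≠ 2 := by rintro rfl; exact absurd hodd (by decide)
    have := hp.two_le
    omega
  rcases hkp.lt_or_eq with hkp | rfl
  · calc p ^ (m + 2) ∣ p ^ (m * k) * p := by rw [← pow_succ]; exact pow_dvd_pow _ (by nlinarith)
      _ ∣ _ := mul_dvd_mul_left _ (hp.dvd_choose_self (by omega) hkp)
  · exact (pow_dvd_pow _ (by nlinarith)).mul_right _

theorem pow_dvd_one_add_pow_prime_sub {R : Type*} [CommRing R] {p m : ℕ} (hp : p.Prime)
    (hodd : Odd p) (hm : 1 ≤ m) (x : R) :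
    (p : R) ^ (m + 2) ∣ (1 + p ^ m * x) ^ p - (1 + p ^ (m + 1) * x) := by
  rw [add_comm 1 (_ * x), add_pow,
    ← Finset.sum_range_add_sum_Ico _ (show 2 ≤ p + 1 by have := hp.two_le; omega)]
  simp only [Finset.sum_range_succ, Finset.sum_range_zero, one_pow, mul_one, pow_zero, pow_one,
    Nat.choose_zero_right, Nat.choose_one_right, Nat.cast_one, zero_add]
  rw [show 1 + (p : R) ^ m * x * p = 1 + p ^ (m + 1) * x by ring, add_sub_cancel_left]
  refine Finset.dvd_sum fun k hk => ?_
  obtain ⟨hk2, hkp⟩ := Finset.mem_Ico.1 hk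
  have hcoeff := Nat.cast_dvd_cast (α := R) (Nat.pow_dvd_pow_mul_choose hp hodd hm hk2 (by omega))
  push_cast at hcoeff
  calc (p : R) ^ (m + 2) ∣ p ^ (m * k) * p.choose k * x ^ k := hcoeff.mul_right _
    _ = _ := by ring

theorem exists_one_add_pow_smul_pow_prime_eq {R A : Type*} [CommRing R] [Ring A] [Algebra R A]
    {p m : ℕ} (hp : p.Prime) (hodd : Odd p) (hm : 1 ≤ m) (x : A) :
    ∃ y : A, (1 + (p : R) ^ m • x) ^ p = 1 + (p : R) ^ (m + 1) • x + (p : R) ^ (m + 2) • y := by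
  obtain ⟨y, hy⟩ := map_dvd (Polynomial.aeval x)
    (pow_dvd_one_add_pow_prime_sub hp hodd hm (Polynomial.X : Polynomial ℤ))
  refine ⟨y, ?_⟩
  simp only [Algebra.smul_def, map_pow, map_natCast]
  simpa [sub_eq_iff_eq_add'] using hy

variable {p : ℕ} [Fact p.Prime]

namespace PadicInt

theorem toZModPow_eq_iff_dvd_sub {m : ℕ} {x y : ℤ_[p]} :
    toZModPow m x = toZModPow m y ↔ (p : ℤ_[p]) ^ m ∣ x - y := by
  rw [← sub_eq_zero, ← map_sub, ← RingHom.mem_ker, ker_toZModPow, Ideal.mem_span_singleton]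

theorem tendsto_of_toZModPow_eq {x : ℕ → ℤ_[p]} {y : ℤ_[p]}
    (h : ∀ m, toZModPow m (x m) = toZModPow m y) : Tendsto x atTop (𝓝 y) := by
  rw [tendsto_iff_norm_sub_tendsto_zero]
  have hnorm : ∀ m, ‖x m - y‖ ≤ ((p : ℝ)⁻¹) ^ m := fun m => by
    rw [inv_pow, ← zpow_natCast, ← _root_.zpow_neg, norm_le_pow_iff_mem_span_pow,
      Ideal.mem_span_singleton]
    exact toZModPow_eq_iff_dvd_sub.1 (h m)
  refine squeeze_zero (fun _ => norm_nonneg _) hnorm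
    (tendsto_pow_atTop_nhds_zero_of_lt_one (by positivity) ?_)
  exact inv_lt_one_of_one_lt₀ (by exact_mod_cast (Fact.out : p.Prime).one_lt)

end PadicInt

namespace Matrix

variable {ι : Type*}

theorem map_toZModPow_eq_iff {m : ℕ} {M N : Matrix ι ι ℤ_[p]} :
    M.map (toZModPow m) = N.map (toZModPow m) ↔ ∃ C, M = N + (p : ℤ_[p]) ^ m • C := by
  constructor
  · intro h
    have hdvd : ∀ i j, (p : ℤ_[p]) ^ m ∣ M i j - N i j := fun i j =>
      toZModPow_eq_iff_dvd_sub.1 (congrFun₂ h i j)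
    choose C hC using hdvd
    exact ⟨Matrix.of C, by ext i j; simp [← hC]⟩
  · rintro ⟨C, rfl⟩
    ext i j
    exact toZModPow_eq_iff_dvd_sub.2 ⟨C i j, by simp⟩

theorem tendsto_of_map_toZModPow_eq {M : ℕ → Matrix ι ι ℤ_[p]} {N : Matrix ι ι ℤ_[p]}
    (h : ∀ m, (M m).map (toZModPow m) = N.map (toZModPow m)) : Tendsto M atTop (𝓝 N) :=
  tendsto_pi_nhds.2 fun i => tendsto_pi_nhds.2 fun j =>
    tendsto_of_toZModPow_eq fun m => congrFun₂ (h m) i j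

variable [Fintype ι] [DecidableEq ι]

theorem isUnit_one_add_pow_smul {m : ℕ} (hm : m ≠ 0) (A : Matrix ι ι ℤ_[p]) :
    IsUnit (1 + (p : ℤ_[p]) ^ m • A) := by
  rw [isUnit_iff_isUnit_det, ← IsLocalRing.notMem_maximalIdeal, ← ker_toZMod, RingHom.mem_ker,
    RingHom.map_det]
  have hred : toZMod.mapMatrix (1 + (p : ℤ_[p]) ^ m • A) = 1 := by
    ext i j
    by_cases hij : i = j <;> simp [hm, one_apply, hij]
  simp [hred]

end Matrix

namespace Matrix.GeneralLinearGroup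

variable {ι : Type*} [Fintype ι] [DecidableEq ι]

theorem map_toZModPow_eq_iff {m : ℕ} {g h : GL ι ℤ_[p]} :
    map (toZModPow m) g = map (toZModPow m) h ↔
      ∃ C, (g : Matrix ι ι ℤ_[p]) = h + (p : ℤ_[p]) ^ m • C := by
  rw [← Matrix.map_toZModPow_eq_iff, Units.ext_iff]
  rfl

theorem map_toZModPow_eq_of_le {m m' : ℕ} (hm : m ≤ m') {g h : GL ι ℤ_[p]}
    (hgh : map (toZModPow m') g = map (toZModPow m') h) :
    map (toZModPow m) g = map (toZModPow m) h := by
  obtain ⟨C, hC⟩ := map_toZModPow_eq_iff.1 hgh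
  refine map_toZModPow_eq_iff.2 ⟨(p : ℤ_[p]) ^ (m' - m) • C, ?_⟩
  rw [hC, smul_smul, ← pow_add, Nat.add_sub_cancel' hm]

theorem tendsto_of_map_toZModPow_eq {g : ℕ → GL ι ℤ_[p]} {h : GL ι ℤ_[p]}
    (hg : ∀ m, map (toZModPow m) (g m) = map (toZModPow m) h) : Tendsto g atTop (𝓝 h) := by
  rw [Units.isInducing_embedProduct.tendsto_nhds_iff]
  refine (Matrix.tendsto_of_map_toZModPow_eq fun m => congrArg Units.val (hg m)).prodMk_nhds ?_
  refine (MulOpposite.continuous_op.tendsto _).comp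
    (Matrix.tendsto_of_map_toZModPow_eq fun m => ?_)
  exact congrArg Units.val (by simpa only [map_inv] using congrArg Inv.inv (hg m))

theorem mem_closure_of_forall_exists_map_toZModPow_eq {K : Set (GL ι ℤ_[p])} {g : GL ι ℤ_[p]}
    (hK : ∀ m, ∃ k ∈ K, map (toZModPow m) k = map (toZModPow m) g) : g ∈ closure K := by
  choose k hkK hkg using hK
  exact mem_closure_of_tendsto (tendsto_of_map_toZModPow_eq hkg) (Eventually.of_forall hkK)

section SurjectiveModPSq

variable {K : Subgroup (GL ι ℤ_[p])}

theorem exists_mem_map_toZModPow_succ_eq_of_mem_ker (hp : Odd p)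
    (hK : ∀ g : GL ι (ZMod (p ^ 2)), ∃ k ∈ K, map (toZModPow 2) k = g) {m : ℕ} (hm : 1 ≤ m) :
    ∀ h ∈ (map (n := ι) (toZModPow (p := p) m)).ker,
      ∃ k ∈ K, map (toZModPow (m + 1)) k = map (toZModPow (m + 1)) h := by
  induction m, hm using Nat.le_induction with
  | base => exact fun h _ => hK _
  | succ m hm ih =>
    intro h hh
    obtain ⟨A, hA⟩ := map_toZModPow_eq_iff.1 (hh.trans (map_one _).symm)
    set h₀ := (isUnit_one_add_pow_smul (by omega : m ≠ 0) A).unit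
    have hh₀ : h₀ ∈ (map (toZModPow m)).ker :=
      (map_toZModPow_eq_iff.2 ⟨A, rfl⟩).trans (map_one _)
    obtain ⟨k, hkK, hk⟩ := ih h₀ hh₀
    obtain ⟨C, hC⟩ := map_toZModPow_eq_iff.1 hk
    have hk' : (k : Matrix ι ι ℤ_[p]) = 1 + (p : ℤ_[p]) ^ m • (A + (p : ℤ_[p]) • C) := by
      rw [hC, IsUnit.unit_spec, smul_add, smul_smul, ← pow_succ, add_assoc]
    obtain ⟨D, hD⟩ := exists_one_add_pow_smul_pow_prime_eq (R := ℤ_[p]) (Fact.out : p.Prime) hp hm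
      (A + (p : ℤ_[p]) • C)
    refine ⟨k ^ p, pow_mem hkK p, map_toZModPow_eq_iff.2 ⟨C + D, ?_⟩⟩
    rw [Units.val_pow_eq_pow_val, hk', hD, hA, Units.val_one, smul_add, smul_smul, ← pow_succ,
      smul_add]
    abel

theorem exists_mem_map_toZModPow_eq (hp : Odd p)
    (hK : ∀ g : GL ι (ZMod (p ^ 2)), ∃ k ∈ K, map (toZModPow 2) k = g) (g : GL ι ℤ_[p])
    (m : ℕ) : ∃ k ∈ K, map (toZModPow m) k = map (toZModPow m) g := by
  suffices h : ∀ m ≥ 2, ∃ k ∈ K, map (toZModPow m) k = map (toZModPow m) g by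
    obtain ⟨k, hkK, hk⟩ := h (max m 2) (le_max_right m 2)
    exact ⟨k, hkK, map_toZModPow_eq_of_le (le_max_left m 2) hk⟩
  intro m hm
  induction m, hm using Nat.le_induction with
  | base => exact hK _
  | succ m hm ih =>
    obtain ⟨k₀, hk₀K, hk₀⟩ := ih
    have hg : g * k₀⁻¹ ∈ (map (toZModPow m)).ker := by
      rw [MonoidHom.mem_ker, map_mul, map_inv, hk₀, mul_inv_cancel]
    obtain ⟨k₁, hk₁K, hk₁⟩ :=
      exists_mem_map_toZModPow_succ_eq_of_mem_ker hp hK (by omega) _ hg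
    refine ⟨k₁ * k₀, mul_mem hk₁K hk₀K, ?_⟩
    rw [map_mul, hk₁, map_mul, map_inv, inv_mul_cancel_right]

end SurjectiveModPSq

end Matrix.GeneralLinearGroup

theorem stmt0_general (p : ℕ) [Fact p.Prime] (hp : Odd p) (n : ℕ)
    (K : Subgroup (GL (Fin n) ℤ_[p]))
    (hclosed : IsClosed (K : Set (GL (Fin n) ℤ_[p])))
    (hsurj : ∀ g : GL (Fin n) (ZMod (p ^ 2)),
      ∃ k ∈ K, Matrix.GeneralLinearGroup.map (PadicInt.toZModPow 2) k = g) :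
    K = ⊤ :=
  (Subgroup.eq_top_iff' K).2 fun g => hclosed.closure_subset <|
    GeneralLinearGroup.mem_closure_of_forall_exists_map_toZModPow_eq
      (GeneralLinearGroup.exists_mem_map_toZModPow_eq hp hsurj g)

/-- Let `p` be an odd prime and `n ≥ 1`. If `K` is a closed subgroup of
`GL n ℤ_[p]` whose image under the reduction map `GL n ℤ_[p] → GL n (ℤ/p²ℤ)` is all of
`GL n (ℤ/p²ℤ)`, then `K = GL n ℤ_[p]`. -/
theorem stmt0 (p : ℕ) [Fact p.Prime] (hp : Odd p) (n : ℕ) (hn : 1 ≤ n)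
    (K : Subgroup (GL (Fin n) ℤ_[p]))
    (hclosed : IsClosed (K : Set (GL (Fin n) ℤ_[p])))
    (hsurj : ∀ g : GL (Fin n) (ZMod (p ^ 2)),
      ∃ k ∈ K, Matrix.GeneralLinearGroup.map (PadicInt.toZModPow 2) k = g) :
    K = ⊤ :=
  stmt0_general p hp n K hclosed hsurj
end

section
/- Let n ≥ 1. If K is a closed subgroup of GL_n(ℤ₂) whose image under the reduction map GL_n(ℤ₂) → GL_n(ℤ/8ℤ) is all of GL_n(ℤ/8ℤ), then K = GL_n(ℤ₂). (Lemma 2.2.1(a) for p = 2, instantiated at G = GL_n over ℤ₂.) -/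
/-!
Since `ℤ₂` is complete, a closed subgroup `K` of `GL n ℤ₂` is everything as soon as every element
is congruent to an element of `K` modulo every power of `2`. Such approximations lift from modulus
`2^(m+1)` to `2^(m+2)` when `m ≥ 2`: write `x = (1 + 2^(m+1) C) k₀` with `k₀ ∈ K` and pick `k₁ ∈ K`
with `k₁ ≡ 1 + 2^m C mod 2^(m+1)`. Squaring doubles the exponent of the error term, so
`k₁² ≡ 1 + 2^(m+1) C mod 2^(m+2)` and `k₁² k₀ ∈ K` approximates `x` modulo `2^(m+2)`.
-/

/-- The reduction-mod-8 ring homomorphism `ℤ₂ →+* ℤ/8ℤ`. -/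
noncomputable def toZMod8 : ℤ_[2] →+* ZMod 8 :=
  (ZMod.castHom (show (8 : ℕ) ∣ 2 ^ 3 by norm_num) (ZMod 8)).comp (PadicInt.toZModPow 3)

open Filter Topology

section Algebra

variable {R A : Type*} [CommRing R] [Ring A] [Algebra R A]

theorem Units.exists_val_inv_eq_add_smul {u v : Aˣ} {r : R} {c : A} (h : (u : A) = v + r • c) :
    ∃ c' : A, (↑u⁻¹ : A) = ↑v⁻¹ + r • c' := by
  refine ⟨-(↑u⁻¹ * c * ↑v⁻¹), ?_⟩
  calc (↑u⁻¹ : A) = ↑u⁻¹ * ((u - r • c) * ↑v⁻¹) := by simp [h]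
    _ = _ := by
      rw [sub_mul, mul_sub, ← mul_assoc, Units.inv_mul, one_mul, smul_mul_assoc, mul_smul_comm,
        ← mul_assoc, sub_eq_add_neg, smul_neg]

theorem exists_one_add_two_pow_smul_sq_eq {m : ℕ} (hm : 2 ≤ m) (C D : A) :
    ∃ E : A, (1 + (2 : R) ^ m • C + (2 : R) ^ (m + 1) • D) ^ 2 =
      1 + (2 : R) ^ (m + 1) • C + (2 : R) ^ (m + 2) • E := by
  obtain ⟨k, rfl⟩ := Nat.exists_eq_add_of_le' hm
  refine ⟨D + (2 : R) ^ k • (C * C) + (2 : R) ^ (k + 1) • (C * D + D * C) +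
    (2 : R) ^ (k + 2) • (D * D), ?_⟩
  simp only [sq, mul_add, add_mul, smul_mul_assoc, mul_smul_comm, smul_smul, smul_add, one_mul,
    mul_one]
  module

end Algebra

theorem Matrix.isUnit_one_add_smul_of_mem_maximalIdeal {ι R : Type*} [Fintype ι] [DecidableEq ι]
    [CommRing R] [IsLocalRing R] {x : R} (hx : x ∈ IsLocalRing.maximalIdeal R)
    (B : Matrix ι ι R) : IsUnit (1 + x • B) := by
  rw [Matrix.isUnit_iff_isUnit_det]
  apply isUnit_of_map_unit (IsLocalRing.residue R)
  have hx0 : IsLocalRing.residue R x = 0 := (IsLocalRing.residue_eq_zero_iff x).mpr hx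
  rw [RingHom.map_det, RingHom.map_add, RingHom.map_one]
  simp [RingHom.mapMatrix_apply, Matrix.map_smul', hx0]

theorem PadicInt.tendsto_of_forall_pow_dvd_sub {p : ℕ} [Fact p.Prime] {f : ℕ → ℤ_[p]}
    {y : ℤ_[p]} (h : ∀ m, (p : ℤ_[p]) ^ m ∣ y - f m) : Tendsto f atTop (𝓝 y) := by
  rw [tendsto_iff_norm_sub_tendsto_zero]
  refine squeeze_zero (fun _ => norm_nonneg _) (g := fun m => ((p : ℝ)⁻¹) ^ m) (fun m => ?_) ?_
  · rw [norm_sub_rev, ← zpow_natCast, inv_zpow', PadicInt.norm_le_pow_iff_mem_span_pow,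
      Ideal.mem_span_singleton]
    exact h m
  · exact tendsto_pow_atTop_nhds_zero_of_lt_one (by positivity)
      (inv_lt_one_of_one_lt₀ (mod_cast (Fact.out : p.Prime).one_lt))

namespace Matrix

variable {ι κ : Type*} {p : ℕ} [Fact p.Prime]

theorem tendsto_of_forall_eq_add_pow_smul {f : ℕ → Matrix ι κ ℤ_[p]} {y : Matrix ι κ ℤ_[p]}
    (h : ∀ m, ∃ C : Matrix ι κ ℤ_[p], y = f m + (p : ℤ_[p]) ^ m • C) :
    Tendsto f atTop (𝓝 y) := by
  choose C hC using h
  refine tendsto_pi_nhds.mpr fun i => tendsto_pi_nhds.mpr fun j =>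
    PadicInt.tendsto_of_forall_pow_dvd_sub fun m => ⟨C m i j, ?_⟩
  rw [hC m]
  simp

variable [Fintype ι] [DecidableEq ι]

theorem GeneralLinearGroup.tendsto_of_forall_eq_add_pow_smul {f : ℕ → GL ι ℤ_[p]}
    {x : GL ι ℤ_[p]}
    (h : ∀ m, ∃ C : Matrix ι ι ℤ_[p], (x : Matrix ι ι ℤ_[p]) = f m + (p : ℤ_[p]) ^ m • C) :
    Tendsto f atTop (𝓝 x) := by
  have hval : Tendsto (fun m => (f m : Matrix ι ι ℤ_[p])) atTop (𝓝 x) :=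
    Matrix.tendsto_of_forall_eq_add_pow_smul h
  have hinv : Tendsto (fun m => (↑(f m)⁻¹ : Matrix ι ι ℤ_[p])) atTop (𝓝 ↑x⁻¹) :=
    Matrix.tendsto_of_forall_eq_add_pow_smul fun m =>
      let ⟨_, hC⟩ := h m
      Units.exists_val_inv_eq_add_smul hC
  rw [Units.isInducing_embedProduct.tendsto_nhds_iff]
  exact hval.prodMk_nhds ((MulOpposite.continuous_op.tendsto _).comp hinv)

end Matrix

theorem ker_toZMod8 : RingHom.ker toZMod8 = Ideal.span {((2 : ℕ) : ℤ_[2]) ^ 3} := by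
  rw [toZMod8, RingHom.ker_comp_of_injective _ (ZMod.castHom_injective (ZMod 8)),
    PadicInt.ker_toZModPow]

namespace Subgroup

variable {ι : Type*} [Fintype ι] [DecidableEq ι]

/-- `K` maps onto `GL ι (ℤ/p^m)`, phrased without the quotient ring. -/
def SurjModPow (p : ℕ) [Fact p.Prime] (K : Subgroup (GL ι ℤ_[p])) (m : ℕ) : Prop :=
  ∀ x : GL ι ℤ_[p], ∃ k ∈ K, ∃ C : Matrix ι ι ℤ_[p],
    (x : Matrix ι ι ℤ_[p]) = k + (p : ℤ_[p]) ^ m • C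

section

variable {p : ℕ} [Fact p.Prime] {K : Subgroup (GL ι ℤ_[p])}

theorem SurjModPow.mono {m m' : ℕ} (h : K.SurjModPow p m) (hle : m' ≤ m) :
    K.SurjModPow p m' := by
  intro x
  obtain ⟨k, hk, C, hC⟩ := h x
  refine ⟨k, hk, (p : ℤ_[p]) ^ (m - m') • C, ?_⟩
  rw [hC, smul_smul, ← pow_add, Nat.add_sub_cancel' hle]

theorem eq_top_of_isClosed_of_forall_surjModPow (hK : IsClosed (K : Set (GL ι ℤ_[p])))
    (h : ∀ m, K.SurjModPow p m) : K = ⊤ := by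
  refine eq_top_iff.mpr fun x _ => ?_
  choose k hk C hC using fun m => h m x
  exact hK.mem_of_tendsto (Matrix.GeneralLinearGroup.tendsto_of_forall_eq_add_pow_smul
    fun m => ⟨C m, hC m⟩) (Eventually.of_forall hk)

end

variable {K : Subgroup (GL ι ℤ_[2])}

theorem SurjModPow.two_pow_succ {m : ℕ} (hm : 2 ≤ m) (h : K.SurjModPow 2 (m + 1)) :
    K.SurjModPow 2 (m + 2) := by
  intro x
  obtain ⟨k₀, hk₀, C₀, hC₀⟩ := h x
  set C : Matrix ι ι ℤ_[2] := C₀ * ((k₀⁻¹ : GL ι ℤ_[2]) : Matrix ι ι ℤ_[2]) with hC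
  have hx : (x : Matrix ι ι ℤ_[2]) = (1 + (2 : ℤ_[2]) ^ (m + 1) • C) * k₀ := by
    rw [add_mul, one_mul, smul_mul_assoc, hC, Units.inv_mul_cancel_right, hC₀, Nat.cast_ofNat]
  have h2 : (2 : ℤ_[2]) ∈ IsLocalRing.maximalIdeal ℤ_[2] := by
    simp [PadicInt.maximalIdeal_eq_span_p]
  have hy : IsUnit (1 + (2 : ℤ_[2]) ^ m • C) :=
    Matrix.isUnit_one_add_smul_of_mem_maximalIdeal (Ideal.pow_mem_of_mem _ h2 m (by omega)) C
  obtain ⟨k₁, hk₁, D, hD⟩ := h hy.unit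
  have hk₁val : (k₁ : Matrix ι ι ℤ_[2]) = 1 + (2 : ℤ_[2]) ^ m • C + (2 : ℤ_[2]) ^ (m + 1) • -D := by
    rw [hy.unit_spec, Nat.cast_ofNat] at hD
    rw [smul_neg, ← sub_eq_add_neg, hD, add_sub_cancel_right]
  obtain ⟨E, hE⟩ := exists_one_add_two_pow_smul_sq_eq (R := ℤ_[2]) hm C (-D)
  have hk₁sq : (k₁ : Matrix ι ι ℤ_[2]) * k₁ =
      1 + (2 : ℤ_[2]) ^ (m + 1) • C + (2 : ℤ_[2]) ^ (m + 2) • E := by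
    rw [← sq, hk₁val, hE]
  refine ⟨k₁ * k₁ * k₀, mul_mem (mul_mem hk₁ hk₁) hk₀, -(E * k₀), ?_⟩
  rw [Units.val_mul, Units.val_mul, hk₁sq, hx, Nat.cast_ofNat]
  simp only [add_mul, smul_mul_assoc, one_mul, smul_neg]
  abel

theorem surjModPow_three_of_forall_map_toZMod8
    (h : ∀ g : GL ι (ZMod 8), ∃ k ∈ K, Matrix.GeneralLinearGroup.map toZMod8 k = g) :
    K.SurjModPow 2 3 := by
  intro x
  obtain ⟨k, hk, hkx⟩ := h (Matrix.GeneralLinearGroup.map toZMod8 x)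
  have hdvd : ∀ i j, ∃ c, (x : Matrix ι ι ℤ_[2]) i j = k i j + ((2 : ℕ) : ℤ_[2]) ^ 3 * c := by
    intro i j
    have hker : (x : Matrix ι ι ℤ_[2]) i j - k i j ∈ RingHom.ker toZMod8 := by
      rw [RingHom.mem_ker, map_sub, ← Matrix.GeneralLinearGroup.map_apply,
        ← Matrix.GeneralLinearGroup.map_apply, hkx, sub_self]
    obtain ⟨c, hc⟩ := Ideal.mem_span_singleton'.mp (ker_toZMod8 ▸ hker)
    exact ⟨c, by rw [mul_comm, hc, add_sub_cancel]⟩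
  choose C hC using hdvd
  exact ⟨k, hk, Matrix.of C, by ext i j; simp [hC]⟩

end Subgroup

theorem stmt1_general (n : ℕ)
    (K : Subgroup (GL (Fin n) ℤ_[2]))
    (hclosed : IsClosed (K : Set (GL (Fin n) ℤ_[2])))
    (hsurj : ∀ g : GL (Fin n) (ZMod 8),
      ∃ k ∈ K, Matrix.GeneralLinearGroup.map toZMod8 k = g) :
    K = ⊤ := by
  have hlevel : ∀ m, K.SurjModPow 2 (m + 3) := by
    intro m
    induction m with
    | zero => exact K.surjModPow_three_of_forall_map_toZMod8 hsurj
    | succ m ih => exact ih.two_pow_succ (by omega)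
  exact K.eq_top_of_isClosed_of_forall_surjModPow hclosed fun m => (hlevel m).mono (by omega)

/-- Let `n ≥ 1`. If `K` is a closed subgroup of `GL n ℤ₂` whose image under
the reduction map `GL n ℤ₂ → GL n (ℤ/8ℤ)` is all of `GL n (ℤ/8ℤ)`, then `K = GL n ℤ₂`. -/
theorem stmt1 (n : ℕ) (hn : 1 ≤ n)
    (K : Subgroup (GL (Fin n) ℤ_[2]))
    (hclosed : IsClosed (K : Set (GL (Fin n) ℤ_[2])))
    (hsurj : ∀ g : GL (Fin n) (ZMod 8),
      ∃ k ∈ K, Matrix.GeneralLinearGroup.map toZMod8 k = g) :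
    K = ⊤ :=
  stmt1_general n K hclosed hsurj
end

section
/- Let p be an odd prime and n ≥ 1. If K is a closed subgroup of SL_n(ℤ_p) whose image under the reduction map SL_n(ℤ_p) → SL_n(ℤ/p²ℤ) is all of SL_n(ℤ/p²ℤ), then K = SL_n(ℤ_p). (Lemma 2.2.1(a) instantiated at G = SL_n over ℤ_p.) -/
/-!
Suppose every `g ∈ SL_n(ℤ_p)` is congruent modulo `p^m`, `m ≥ 2`, to some `x ∈ K`, and write
`g x⁻¹ = 1 + p^m A`. From `det (g x⁻¹) = 1` one gets `p ∣ tr A`, so `1 + p^(m-1) A` has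
determinant `≡ 1 (mod p^m)` and is congruent modulo `p^m` to an element of `SL_n(ℤ_p)`, hence to
some `y ∈ K`. For odd `p` the binomial theorem gives `y^p ≡ 1 + p^m A (mod p^(m+1))`, so
`y^p x ∈ K` is congruent to `g` modulo `p^(m+1)`. By induction from `m = 2`, `K` is dense in
`SL_n(ℤ_p)`; being closed, it is everything.
-/

instance SLtop (p : ℕ) [Fact p.Prime] (n : ℕ) :
    TopologicalSpace (Matrix.SpecialLinearGroup (Fin n) ℤ_[p]) :=
  inferInstanceAs (TopologicalSpace { A : Matrix (Fin n) (Fin n) ℤ_[p] // A.det = 1 })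

namespace Matrix

variable {n R : Type*} [CommRing R]

def EntriesDvd (a : R) (M : Matrix n n R) : Prop := ∀ i j, a ∣ M i j

theorem entriesDvd_smul (a : R) (A : Matrix n n R) : EntriesDvd a (a • A) :=
  fun i j => dvd_mul_right a (A i j)

namespace EntriesDvd

variable {a b : R} {M N : Matrix n n R}

theorem of_dvd (hab : a ∣ b) (hM : EntriesDvd b M) : EntriesDvd a M :=
  fun i j => hab.trans (hM i j)

theorem add (hM : EntriesDvd a M) (hN : EntriesDvd a N) : EntriesDvd a (M + N) :=
  fun i j => dvd_add (hM i j) (hN i j)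

theorem neg (hM : EntriesDvd a M) : EntriesDvd a (-M) :=
  fun i j => (hM i j).neg_right

theorem smul (c : R) (hM : EntriesDvd a M) : EntriesDvd (c * a) (c • M) :=
  fun i j => mul_dvd_mul_left c (hM i j)

theorem sum {ι : Type*} {s : Finset ι} {f : ι → Matrix n n R}
    (h : ∀ i ∈ s, EntriesDvd a (f i)) : EntriesDvd a (∑ i ∈ s, f i) :=
  fun i j => by simpa only [Matrix.sum_apply] using Finset.dvd_sum fun k hk => h k hk i j

theorem exists_eq_smul (hM : EntriesDvd a M) : ∃ A : Matrix n n R, M = a • A :=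
  ⟨Matrix.of fun i j => (hM i j).choose, by ext i j; exact (hM i j).choose_spec⟩

variable [Fintype n]

theorem mul_right (hM : EntriesDvd a M) (N : Matrix n n R) : EntriesDvd a (M * N) :=
  fun i _ => Finset.dvd_sum fun k _ => (hM i k).mul_right _

theorem mul (hM : EntriesDvd a M) (hN : EntriesDvd b N) : EntriesDvd (a * b) (M * N) :=
  fun i j => Finset.dvd_sum fun k _ => mul_dvd_mul (hM i k) (hN k j)

theorem pow [DecidableEq n] (hM : EntriesDvd a M) (k : ℕ) : EntriesDvd (a ^ k) (M ^ k) := by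
  induction k with
  | zero => exact fun i j => by simp
  | succ k ih => simpa only [pow_succ] using ih.mul hM

end EntriesDvd

variable [Fintype n] [DecidableEq n]

theorem dvd_trace_of_det_one_add_smul_eq_one [IsDomain R] {a : R} (ha : a ≠ 0)
    {A : Matrix n n R} (hdet : (1 + a • A).det = 1) : a ∣ A.trace := by
  rw [det_one_add_smul] at hdet
  set c := Polynomial.eval a
    (1 + (Polynomial.X : Polynomial R) • A.map Polynomial.C).det.divX.divX
  have : (A.trace + c * a) * a = 0 := by linear_combination hdet
  exact ⟨-c, by linear_combination (mul_eq_zero.mp this).resolve_right ha⟩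

theorem dvd_det_one_add_smul_sub_one {a b : R} {A : Matrix n n R} (htr : a ∣ b * A.trace)
    (hb : a ∣ b ^ 2) : a ∣ (1 + b • A).det - 1 := by
  rw [det_one_add_smul, add_assoc, add_sub_cancel_left, mul_comm A.trace]
  exact dvd_add htr (hb.mul_left _)

theorem exists_specialLinearGroup_entriesDvd_sub {a : R} {M : Matrix n n R}
    (hunit : IsUnit M.det) (ha : a ∣ M.det - 1) :
    ∃ h : SpecialLinearGroup n R, EntriesDvd a ((h : Matrix n n R) - M) := by
  cases isEmpty_or_nonempty n with
  | inl _ => exact ⟨1, fun i => isEmptyElim i⟩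
  | inr _ =>
    obtain ⟨u, hu⟩ := hunit
    let i₀ : n := Classical.arbitrary n
    let d : n → R := Function.update 1 i₀ ((u⁻¹ : Rˣ) : R)
    have hdet : (diagonal d * M).det = 1 := by
      rw [det_mul, det_diagonal, Finset.prod_update_of_mem (Finset.mem_univ i₀), ← hu]
      simp
    refine ⟨⟨diagonal d * M, hdet⟩, ?_⟩
    have hd : EntriesDvd a (diagonal d - 1) := by
      intro i j
      rcases eq_or_ne i j with rfl | hij
      · rcases eq_or_ne i i₀ with rfl | hi
        · have hdi : diagonal d i₀ i₀ - (1 : Matrix n n R) i₀ i₀ = ↑u⁻¹ * -(M.det - 1) := by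
            rw [diagonal_apply_eq, one_apply_eq, show d i₀ = ↑u⁻¹ from Function.update_self ..,
              ← hu, neg_sub, mul_sub, mul_one, Units.inv_mul]
          rw [sub_apply, hdi]
          exact ha.neg_right.mul_left _
        · simp [d, hi]
      · simp [hij]
    simpa [sub_mul] using hd.mul_right M

open Finset in
/-- The terms `choose p i • X ^ i` with `2 ≤ i < p` gain a factor `p` from the binomial coefficient;
the last term `X ^ p` is divisible by `p ^ (k * p)`, which is too little for `p = 2`, `k = 1`. -/
theorem entriesDvd_one_add_pow_sub_sub {p : ℕ} (hp : p.Prime) (hodd : Odd p) {k : ℕ}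
    (hk : 1 ≤ k) {X : Matrix n n R} (hX : EntriesDvd ((p : R) ^ k) X) :
    EntriesDvd ((p : R) ^ (k + 2)) ((1 + X) ^ p - 1 - (p : R) • X) := by
  have hp3 : 3 ≤ p := by obtain ⟨r, rfl⟩ := hodd; have := hp.two_le; omega
  have hexp : (1 + X) ^ p - 1 - (p : R) • X = ∑ i ∈ Ico 2 (p + 1), (p.choose i : R) • X ^ i := by
    rw [add_comm, (Commute.one_right X).add_pow, range_eq_Ico,
      sum_eq_sum_Ico_succ_bot (by omega), sum_eq_sum_Ico_succ_bot (by omega)]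
    simp only [zero_add, one_pow, mul_one, pow_zero, Nat.choose_zero_right, Nat.cast_one, pow_one,
      Nat.choose_one_right, ← Nat.cast_smul_eq_nsmul R, ← nsmul_eq_mul']
    abel
  rw [hexp]
  refine EntriesDvd.sum fun i hi => ?_
  obtain ⟨hi2, hip⟩ := mem_Ico.mp hi
  have hXi : EntriesDvd ((p : R) ^ (k * i)) (X ^ i) := by simpa only [pow_mul] using hX.pow i
  rcases eq_or_lt_of_le (Nat.lt_succ_iff.mp hip) with rfl | hip
  · rw [Nat.choose_self, Nat.cast_one, one_smul]
    exact hXi.of_dvd (pow_dvd_pow _ (by nlinarith))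
  · obtain ⟨t, ht⟩ := hp.dvd_choose_self (by omega) hip
    rw [ht, Nat.cast_mul, mul_smul]
    exact ((hXi.smul (t : R)).smul (p : R)).of_dvd
      ((pow_dvd_pow _ (by nlinarith : k + 2 ≤ k * i + 1)).trans (Dvd.intro t (by ring)))

theorem entriesDvd_pow_sub_one_add_smul {p : ℕ} (hp : p.Prime) (hodd : Odd p) {k : ℕ}
    (hk : 1 ≤ k) {Y A : Matrix n n R}
    (hY : EntriesDvd ((p : R) ^ (k + 1)) (Y - (1 + (p : R) ^ k • A))) :
    EntriesDvd ((p : R) ^ (k + 2)) (Y ^ p - (1 + (p : R) ^ (k + 1) • A)) := by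
  obtain ⟨X, rfl⟩ : ∃ X, Y = 1 + X := ⟨Y - 1, by abel⟩
  have hX : EntriesDvd ((p : R) ^ k) X := by
    simpa using (hY.of_dvd (pow_dvd_pow _ k.le_succ)).add (entriesDvd_smul _ A)
  have hpY : EntriesDvd ((p : R) ^ (k + 2)) ((p : R) • (1 + X - (1 + (p : R) ^ k • A))) := by
    simpa only [← pow_succ'] using hY.smul (p : R)
  convert (entriesDvd_one_add_pow_sub_sub hp hodd hk hX).add hpY using 1
  simp only [smul_sub, smul_add, smul_smul, ← pow_succ']
  abel

end Matrix

open Filter Topology Matrix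
open Matrix.SpecialLinearGroup (coe_mul coe_pow coe_one)

section Padic

variable {p : ℕ} [Fact p.Prime]

namespace PadicInt

theorem isUnit_of_dvd_sub_one {x : ℤ_[p]} (h : (p : ℤ_[p]) ∣ x - 1) : IsUnit x := by
  have : -(x - 1) ∈ IsLocalRing.maximalIdeal ℤ_[p] := by
    rw [maximalIdeal_eq_span_p]
    exact neg_mem (Ideal.mem_span_singleton.mpr h)
  simpa using IsLocalRing.isUnit_one_sub_self_of_mem_nonunits _ this

theorem tendsto_of_pow_dvd_sub {x : ℕ → ℤ_[p]} {y : ℤ_[p]} (h : ∀ m, (p : ℤ_[p]) ^ m ∣ x m - y) :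
    Tendsto x atTop (𝓝 y) := by
  rw [tendsto_iff_norm_sub_tendsto_zero]
  refine squeeze_zero (fun _ => norm_nonneg _) (fun m => ?_)
    (tendsto_pow_atTop_nhds_zero_of_lt_one (norm_nonneg _)
      ((norm_lt_one_iff_dvd (p := p) _).mpr dvd_rfl))
  obtain ⟨w, hw⟩ := h m
  rw [hw, norm_mul, norm_pow]
  exact mul_le_of_le_one_right (by positivity) (norm_le_one w)

end PadicInt

section ApproxModPow

variable {n : Type*} [Fintype n] [DecidableEq n]

/-- `K` maps onto the image of `SL_n(ℤ_p)` in `SL_n(ℤ/p^m)`. -/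
def ApproxModPow (K : Subgroup (SpecialLinearGroup n ℤ_[p])) (m : ℕ) : Prop :=
  ∀ g : SpecialLinearGroup n ℤ_[p], ∃ x ∈ K,
    EntriesDvd ((p : ℤ_[p]) ^ m) ((g : Matrix n n ℤ_[p]) - (x : Matrix n n ℤ_[p]))

theorem approxModPow_of_surjective {K : Subgroup (SpecialLinearGroup n ℤ_[p])} (m : ℕ)
    (hsurj : ∀ g : SpecialLinearGroup n (ZMod (p ^ m)),
      ∃ k ∈ K, SpecialLinearGroup.map (PadicInt.toZModPow m) k = g) :
    ApproxModPow K m := by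
  intro g
  obtain ⟨x, hxK, hx⟩ := hsurj (SpecialLinearGroup.map (PadicInt.toZModPow m) g)
  refine ⟨x, hxK, fun i j => ?_⟩
  have hij : PadicInt.toZModPow m ((x : Matrix n n ℤ_[p]) i j) = PadicInt.toZModPow m (g i j) :=
    congrArg (fun M : SpecialLinearGroup n (ZMod (p ^ m)) => (M : Matrix n n (ZMod (p ^ m))) i j) hx
  rw [← Ideal.mem_span_singleton, ← PadicInt.ker_toZModPow, RingHom.mem_ker, Matrix.sub_apply,
    map_sub, hij, sub_self]

theorem ApproxModPow.of_le {K : Subgroup (SpecialLinearGroup n ℤ_[p])} {m m' : ℕ} (h : m' ≤ m)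
    (hK : ApproxModPow K m) : ApproxModPow K m' := fun g =>
  (hK g).imp fun _ ⟨hxK, hx⟩ => ⟨hxK, hx.of_dvd (pow_dvd_pow _ h)⟩

theorem exists_specialLinearGroup_entriesDvd_sub_one_add_smul {k : ℕ} (hk : 1 ≤ k)
    {A : Matrix n n ℤ_[p]} (hdet : (1 + (p : ℤ_[p]) ^ (k + 1) • A).det = 1) :
    ∃ h : SpecialLinearGroup n ℤ_[p],
      EntriesDvd ((p : ℤ_[p]) ^ (k + 1)) ((h : Matrix n n ℤ_[p]) - (1 + (p : ℤ_[p]) ^ k • A)) := by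
  have hp0 : (p : ℤ_[p]) ≠ 0 := Nat.cast_ne_zero.mpr (Fact.out : p.Prime).ne_zero
  have htr := dvd_trace_of_det_one_add_smul_eq_one (pow_ne_zero _ hp0) hdet
  have hdet' : (p : ℤ_[p]) ^ (k + 1) ∣ (1 + (p : ℤ_[p]) ^ k • A).det - 1 := by
    refine dvd_det_one_add_smul_sub_one ?_ ?_
    · rw [pow_succ]
      exact mul_dvd_mul_left _ ((dvd_pow_self _ k.succ_ne_zero).trans htr)
    · rw [← pow_mul]
      exact pow_dvd_pow _ (by omega)
  exact exists_specialLinearGroup_entriesDvd_sub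
    (PadicInt.isUnit_of_dvd_sub_one ((dvd_pow_self _ k.succ_ne_zero).trans hdet')) hdet'

theorem ApproxModPow.succ (hp : Odd p) {K : Subgroup (SpecialLinearGroup n ℤ_[p])} {m : ℕ}
    (hm : 2 ≤ m) (hK : ApproxModPow K m) : ApproxModPow K (m + 1) := by
  obtain ⟨k, rfl⟩ : ∃ k, m = k + 1 := ⟨m - 1, by omega⟩
  intro g
  obtain ⟨x, hxK, hx⟩ := hK g
  obtain ⟨A, hA⟩ := (hx.mul_right (x⁻¹ : SpecialLinearGroup n ℤ_[p])).exists_eq_smul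
  have hE : ((g * x⁻¹ : SpecialLinearGroup n ℤ_[p]) : Matrix n n ℤ_[p]) =
      1 + (p : ℤ_[p]) ^ (k + 1) • A := by
    rw [← hA, sub_mul, ← coe_mul, ← coe_mul, mul_inv_cancel, coe_one]
    abel
  obtain ⟨h, hh⟩ := exists_specialLinearGroup_entriesDvd_sub_one_add_smul (by omega : 1 ≤ k)
    (hE ▸ (g * x⁻¹).prop)
  obtain ⟨y, hyK, hy⟩ := hK h
  have hyA : EntriesDvd ((p : ℤ_[p]) ^ (k + 1))
      ((y : Matrix n n ℤ_[p]) - (1 + (p : ℤ_[p]) ^ k • A)) := by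
    simpa using hy.neg.add hh
  refine ⟨y ^ p * x, K.mul_mem (K.pow_mem hyK p) hxK, ?_⟩
  convert ((entriesDvd_pow_sub_one_add_smul Fact.out hp (by omega) hyA).mul_right
    (x : Matrix n n ℤ_[p])).neg using 1
  rw [← hE, coe_mul, coe_pow, sub_mul, coe_mul, mul_assoc, ← coe_mul, inv_mul_cancel, coe_one,
    mul_one]
  abel

theorem ApproxModPow.of_two (hp : Odd p) {K : Subgroup (SpecialLinearGroup n ℤ_[p])}
    (h2 : ApproxModPow K 2) (m : ℕ) : ApproxModPow K m := by
  have hge : ∀ m ≥ 2, ApproxModPow K m := fun m hm => by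
    induction m, hm using Nat.le_induction with
    | base => exact h2
    | succ m hm ih => exact ih.succ hp hm
  exact (hge (max m 2) (le_max_right _ _)).of_le (le_max_left _ _)

end ApproxModPow

theorem eq_top_of_isClosed_of_forall_approxModPow {n : ℕ}
    {K : Subgroup (SpecialLinearGroup (Fin n) ℤ_[p])}
    (hK : IsClosed (K : Set (SpecialLinearGroup (Fin n) ℤ_[p])))
    (happrox : ∀ m, ApproxModPow K m) : K = ⊤ := by
  refine (Subgroup.eq_top_iff' K).mpr fun g => ?_
  choose x hxK hx using fun m => happrox m g
  have hlim : Tendsto x atTop (𝓝 g) := by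
    have hind : IsInducing
        fun A : SpecialLinearGroup (Fin n) ℤ_[p] => (A : Matrix (Fin n) (Fin n) ℤ_[p]) := ⟨rfl⟩
    rw [hind.tendsto_nhds_iff]
    refine tendsto_pi_nhds.mpr fun i => tendsto_pi_nhds.mpr fun j => ?_
    exact PadicInt.tendsto_of_pow_dvd_sub fun m => dvd_sub_comm.mp (hx m i j)
  exact hK.mem_of_tendsto hlim (Eventually.of_forall hxK)

end Padic

theorem stmt2_general (p : ℕ) [Fact p.Prime] (hp : Odd p) (n : ℕ)
    (K : Subgroup (Matrix.SpecialLinearGroup (Fin n) ℤ_[p]))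
    (hclosed : IsClosed (K : Set (Matrix.SpecialLinearGroup (Fin n) ℤ_[p])))
    (hsurj : ∀ g : Matrix.SpecialLinearGroup (Fin n) (ZMod (p ^ 2)),
      ∃ k ∈ K, Matrix.SpecialLinearGroup.map (PadicInt.toZModPow 2) k = g) :
    K = ⊤ :=
  eq_top_of_isClosed_of_forall_approxModPow hclosed
    ((approxModPow_of_surjective 2 hsurj).of_two hp)

/-- Let `p` be an odd prime and `n ≥ 1`. If `K` is a closed subgroup of
`SL_n(ℤ_p)` whose image under the reduction map `SL_n(ℤ_p) → SL_n(ℤ/p²ℤ)` is all of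
`SL_n(ℤ/p²ℤ)`, then `K = SL_n(ℤ_p)`. -/
theorem stmt2 (p : ℕ) [Fact p.Prime] (hp : Odd p) (n : ℕ) (hn : 1 ≤ n)
    (K : Subgroup (Matrix.SpecialLinearGroup (Fin n) ℤ_[p]))
    (hclosed : IsClosed (K : Set (Matrix.SpecialLinearGroup (Fin n) ℤ_[p])))
    (hsurj : ∀ g : Matrix.SpecialLinearGroup (Fin n) (ZMod (p ^ 2)),
      ∃ k ∈ K, Matrix.SpecialLinearGroup.map (PadicInt.toZModPow 2) k = g) :
    K = ⊤ :=
  stmt2_general p hp n K hclosed hsurj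
end

section
/- Let n ≥ 1. If K is a closed subgroup of SL_n(ℤ₂) whose image under the reduction map SL_n(ℤ₂) → SL_n(ℤ/8ℤ) is all of SL_n(ℤ/8ℤ), then K = SL_n(ℤ₂). (Lemma 2.2.1(a) for p = 2, instantiated at G = SL_n over ℤ₂.) -/
/-- The `2`-adic topology on `SL_n(ℤ₂)`, induced from the product topology on matrices. -/
instance SLtop2 (n : ℕ) :
    TopologicalSpace (Matrix.SpecialLinearGroup (Fin n) ℤ_[2]) :=
  inferInstanceAs (TopologicalSpace { A : Matrix (Fin n) (Fin n) ℤ_[2] // A.det = 1 })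

/-!
Write `Γ(b)` for the matrices in `SL_n(ℤ₂)` congruent to `1` modulo `b`. Surjectivity modulo `8`
says `K · Γ(8) = SL_n(ℤ₂)`. Suppose `K · Γ(2a) = SL_n(ℤ₂)` with `4 ∣ a`, and let `u = 1 + 2a A`
lie in `Γ(2a)`. Expanding `det u = 1` shows `2 ∣ tr A`, so `det (1 + a A) ≡ 1 [mod 2a]`, and
rescaling one column turns `1 + a A` into some `v ∈ SL_n(ℤ₂)` with `v ≡ 1 + a A [mod 2a]`.
Choosing `h ∈ K` with `h ≡ v [mod 2a]`, the square `h²` is congruent to `u` modulo `4a`, hence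
`K · Γ(4a) = SL_n(ℤ₂)`. So `K` meets every `2`-adic neighbourhood of every matrix, and being closed
it is everything.
-/

open Matrix IsLocalRing Filter Topology

section ModEq

variable {ι R : Type*} [CommRing R]

def Matrix.ModEq (a : R) (X Y : Matrix ι ι R) : Prop :=
  ∃ B, X = Y + a • B

namespace Matrix.ModEq

variable {a b : R} {X Y Z : Matrix ι ι R}

theorem symm (h : ModEq a X Y) : ModEq a Y X := by
  obtain ⟨B, rfl⟩ := h
  exact ⟨-B, by rw [smul_neg, add_neg_cancel_right]⟩

theorem trans (h : ModEq a X Y) (h' : ModEq a Y Z) : ModEq a X Z := by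
  obtain ⟨B, rfl⟩ := h
  obtain ⟨B', rfl⟩ := h'
  exact ⟨B' + B, by rw [smul_add, add_assoc]⟩

theorem of_dvd (hab : a ∣ b) (h : ModEq b X Y) : ModEq a X Y := by
  obtain ⟨c, rfl⟩ := hab
  obtain ⟨B, rfl⟩ := h
  exact ⟨c • B, by rw [mul_smul]⟩

theorem iff_forall_dvd : ModEq a X Y ↔ ∀ i j, a ∣ X i j - Y i j := by
  constructor
  · rintro ⟨B, rfl⟩ i j
    exact ⟨B i j, by simp⟩
  · intro h
    choose B hB using h
    exact ⟨Matrix.of B, by ext i j; simp [← hB]⟩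

theorem mul_left [Fintype ι] (Z : Matrix ι ι R) (h : ModEq a X Y) :
    ModEq a (Z * X) (Z * Y) := by
  obtain ⟨B, rfl⟩ := h
  exact ⟨Z * B, by rw [mul_add, Matrix.mul_smul]⟩

end Matrix.ModEq

end ModEq

variable {ι R : Type*} [Fintype ι] [DecidableEq ι] [CommRing R]

theorem Matrix.dvd_trace_of_det_one_add_smul_eq_one_s3 [IsDomain R] {r : R} (hr : r ≠ 0)
    {A : Matrix ι ι R} (h : det (1 + r • A) = 1) : r ∣ trace A := by
  obtain ⟨P, hP⟩ : ∃ P : R, det (1 + r • A) = 1 + trace A * r + P * r ^ 2 :=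
    ⟨_, det_one_add_smul r A⟩
  have : r * (trace A + P * r) = 0 := by linear_combination h - hP
  exact ⟨-P, by linear_combination (mul_eq_zero.1 this).resolve_left hr⟩

theorem Matrix.mul_dvd_det_one_add_smul_sub_one {r s : R} {A : Matrix ι ι R}
    (hs : s ∣ trace A) (hsr : s ∣ r) : s * r ∣ det (1 + r • A) - 1 := by
  obtain ⟨P, hP⟩ : ∃ P : R, det (1 + r • A) = 1 + trace A * r + P * r ^ 2 :=
    ⟨_, det_one_add_smul r A⟩
  obtain ⟨t, ht⟩ := hs
  obtain ⟨u, hu⟩ := hsr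
  exact ⟨t + P * u, by rw [hP, ht]; linear_combination P * r * hu⟩

theorem exists_specialLinearGroup_modEq [IsLocalRing R] {b : R} (hb : b ∈ maximalIdeal R)
    {M : Matrix ι ι R} (hdet : b ∣ det M - 1) :
    ∃ v : SpecialLinearGroup ι R, ModEq b (v : Matrix ι ι R) M := by
  rcases isEmpty_or_nonempty ι with hι | ⟨⟨i₀⟩⟩
  · exact ⟨⟨M, det_isEmpty⟩, 0, by simp⟩
  obtain ⟨w, hw⟩ := hdet
  have hunit : IsUnit (det M) := by
    simpa [sub_eq_iff_eq_add'.1 hw] using isUnit_one_sub_self_of_mem_nonunits (-(b * w))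
      (by simpa using Ideal.mul_mem_right w _ hb)
  set u : R := ↑hunit.unit⁻¹
  have hu : det M * u = 1 := hunit.mul_val_inv
  have hdiag : diagonal (Pi.mulSingle i₀ u) = 1 + b • diagonal (Pi.single i₀ (-(u * w))) := by
    ext i j
    rcases eq_or_ne i j with rfl | hij
    · rcases eq_or_ne i i₀ with rfl | hi
      · simp only [diagonal_apply_eq, Pi.mulSingle_eq_same, Matrix.add_apply, one_apply_eq,
          Matrix.smul_apply, Pi.single_eq_same, smul_eq_mul, mul_neg]
        linear_combination hu - u * hw
      · simp [hi]
    · simp [hij]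
  refine ⟨⟨M * diagonal (Pi.mulSingle i₀ u), ?_⟩, M * diagonal (Pi.single i₀ (-(u * w))), ?_⟩
  · rw [det_mul, det_diagonal, Fintype.prod_pi_mulSingle', hu]
  · simp only [hdiag, mul_add, mul_one, Matrix.mul_smul]

theorem mul_self_modEq_one_add_smul {a : R} (ha : 4 ∣ a) {X A : Matrix ι ι R}
    (h : ModEq (2 * a) X (1 + a • A)) : ModEq (4 * a) (X * X) (1 + (2 * a) • A) := by
  obtain ⟨c, rfl⟩ := ha
  obtain ⟨B, rfl⟩ := h
  refine ⟨B + c • ((A + (2 : R) • B) * (A + (2 : R) • B)), ?_⟩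
  simp only [mul_add, add_mul, one_mul, mul_one, Matrix.smul_mul, Matrix.mul_smul, smul_smul]
  module

/-- `K · Γ(b) = SL_n(R)`, where `Γ(b)` is the principal congruence subgroup of level `b`. -/
def SurjectsModulo (K : Subgroup (SpecialLinearGroup ι R)) (b : R) : Prop :=
  ∀ g : SpecialLinearGroup ι R, ∃ k ∈ K, ModEq b (k : Matrix ι ι R) g

theorem SurjectsModulo.double [IsDomain R] [IsLocalRing R] {K : Subgroup (SpecialLinearGroup ι R)}
    {a : R} (ha : 4 ∣ a) (h2a : 2 * a ≠ 0) (hmax : 2 * a ∈ maximalIdeal R)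
    (hK : SurjectsModulo K (2 * a)) : SurjectsModulo K (4 * a) := by
  intro g
  obtain ⟨k, hkK, hk⟩ := hK g
  obtain ⟨A, hA⟩ : ModEq (2 * a) ((k⁻¹ * g : SpecialLinearGroup ι R) : Matrix ι ι R) 1 := by
    simpa [SpecialLinearGroup.coe_inv, adjugate_mul] using (hk.mul_left (adjugate k)).symm
  have htr : 2 ∣ trace A := (dvd_mul_right 2 a).trans <|
    dvd_trace_of_det_one_add_smul_eq_one_s3 h2a (hA ▸ (k⁻¹ * g).det_coe)
  obtain ⟨v, hv⟩ := exists_specialLinearGroup_modEq hmax (M := 1 + a • A) <|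
    mul_dvd_det_one_add_smul_sub_one htr ((show (2 : R) ∣ 4 from ⟨2, by norm_num⟩).trans ha)
  obtain ⟨h, hhK, hh⟩ := hK v
  refine ⟨k * (h * h), K.mul_mem hkK (K.mul_mem hhK hhK), ?_⟩
  have hsq := mul_self_modEq_one_add_smul ha (hh.trans hv)
  rw [← hA] at hsq
  simpa [SpecialLinearGroup.coe_inv, ← mul_assoc, mul_adjugate] using hsq.mul_left (k : Matrix ι ι R)

theorem PadicInt.tendsto_of_pow_dvd_sub_s3 {p : ℕ} [Fact p.Prime] {x : ℕ → ℤ_[p]} {y : ℤ_[p]}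
    (h : ∀ m, (p : ℤ_[p]) ^ m ∣ x m - y) : Tendsto x atTop (𝓝 y) := by
  have hp : (1 : ℝ) < p := mod_cast (Fact.out : p.Prime).one_lt
  rw [tendsto_iff_norm_sub_tendsto_zero]
  refine squeeze_zero (fun _ => norm_nonneg _) (fun m => ?_)
    (tendsto_pow_atTop_nhds_zero_of_lt_one (inv_nonneg.2 (by linarith)) (inv_lt_one_of_one_lt₀ hp))
  rw [inv_pow, ← zpow_natCast, ← _root_.zpow_neg]
  exact (norm_le_pow_iff_mem_span_pow _ m).2 (Ideal.mem_span_singleton.2 (h m))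

theorem Matrix.SpecialLinearGroup.mem_closure_of_forall_modEq {p : ℕ} [Fact p.Prime]
    {S : Set (SpecialLinearGroup ι ℤ_[p])} {g : SpecialLinearGroup ι ℤ_[p]}
    (h : ∀ m, ∃ k ∈ S, ModEq ((p : ℤ_[p]) ^ m) (k : Matrix ι ι ℤ_[p]) g) : g ∈ closure S := by
  choose k hkS hk using h
  refine mem_closure_of_tendsto (f := k) (b := atTop) ?_ (Eventually.of_forall hkS)
  refine tendsto_subtype_rng.2 (tendsto_pi_nhds.2 fun i => tendsto_pi_nhds.2 fun j => ?_)
  exact PadicInt.tendsto_of_pow_dvd_sub_s3 fun m => Matrix.ModEq.iff_forall_dvd.1 (hk m) i j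

theorem pow_three_dvd_sub_of_toZMod8_eq {x y : ℤ_[2]} (h : toZMod8 x = toZMod8 y) :
    (2 : ℤ_[2]) ^ 3 ∣ x - y := by
  have hcast : Function.Injective (ZMod.castHom (show (8 : ℕ) ∣ 2 ^ 3 by norm_num) (ZMod 8)) := by
    decide
  have : x - y ∈ RingHom.ker (PadicInt.toZModPow (p := 2) 3) := by
    rw [RingHom.mem_ker, map_sub, sub_eq_zero]
    exact hcast h
  rw [PadicInt.ker_toZModPow, Ideal.mem_span_singleton] at this
  simpa using this

theorem surjectsModulo_two_pow_three {K : Subgroup (SpecialLinearGroup ι ℤ_[2])}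
    (hsurj : ∀ g : SpecialLinearGroup ι (ZMod 8), ∃ k ∈ K, SpecialLinearGroup.map toZMod8 k = g) :
    SurjectsModulo K ((2 : ℤ_[2]) ^ 3) := by
  intro g
  obtain ⟨k, hkK, hk⟩ := hsurj (SpecialLinearGroup.map toZMod8 g)
  refine ⟨k, hkK, Matrix.ModEq.iff_forall_dvd.2 fun i j => ?_⟩
  refine pow_three_dvd_sub_of_toZMod8_eq ?_
  simpa using congrArg (fun g : SpecialLinearGroup ι (ZMod 8) => (g : Matrix ι ι (ZMod 8)) i j) hk

theorem SurjectsModulo.two_pow_add_three {K : Subgroup (SpecialLinearGroup ι ℤ_[2])}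
    (h8 : SurjectsModulo K ((2 : ℤ_[2]) ^ 3)) (m : ℕ) :
    SurjectsModulo K ((2 : ℤ_[2]) ^ (m + 3)) := by
  induction m with
  | zero => exact h8
  | succ m ih =>
    have h2 : (2 : ℤ_[2]) ∈ maximalIdeal ℤ_[2] := by simpa using PadicInt.p_nonunit (p := 2)
    have hdouble := SurjectsModulo.double (a := (2 : ℤ_[2]) ^ (m + 2)) ⟨2 ^ m, by ring⟩
      (by rw [← pow_succ']; exact pow_ne_zero _ two_ne_zero) (Ideal.mul_mem_right _ _ h2)
      (by rwa [← pow_succ'])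
    rwa [show (4 : ℤ_[2]) * 2 ^ (m + 2) = 2 ^ (m + 1 + 3) by ring] at hdouble

theorem stmt3_general (n : ℕ)
    (K : Subgroup (Matrix.SpecialLinearGroup (Fin n) ℤ_[2]))
    (hclosed : IsClosed (K : Set (Matrix.SpecialLinearGroup (Fin n) ℤ_[2])))
    (hsurj : ∀ g : Matrix.SpecialLinearGroup (Fin n) (ZMod 8),
      ∃ k ∈ K, Matrix.SpecialLinearGroup.map toZMod8 k = g) :
    K = ⊤ := by
  have hK := (surjectsModulo_two_pow_three hsurj).two_pow_add_three
  refine eq_top_iff.2 fun g _ => hclosed.closure_subset <|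
    Matrix.SpecialLinearGroup.mem_closure_of_forall_modEq (p := 2) fun m => ?_
  obtain ⟨k, hkK, hk⟩ := hK m g
  exact ⟨k, hkK, hk.of_dvd (by simpa using pow_dvd_pow 2 (by omega : m ≤ m + 3))⟩

/-- Let `n ≥ 1`. If `K` is a closed subgroup of `SL_n(ℤ₂)` whose image under
the reduction map `SL_n(ℤ₂) → SL_n(ℤ/8ℤ)` is all of `SL_n(ℤ/8ℤ)`, then `K = SL_n(ℤ₂)`. -/
theorem stmt3 (n : ℕ) (hn : 1 ≤ n)
    (K : Subgroup (Matrix.SpecialLinearGroup (Fin n) ℤ_[2]))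
    (hclosed : IsClosed (K : Set (Matrix.SpecialLinearGroup (Fin n) ℤ_[2])))
    (hsurj : ∀ g : Matrix.SpecialLinearGroup (Fin n) (ZMod 8),
      ∃ k ∈ K, Matrix.SpecialLinearGroup.map toZMod8 k = g) :
    K = ⊤ :=
  stmt3_general n K hclosed hsurj
end

section
/- Let n ≥ 1 and let a, b be n×n matrices over ℤ₂. Then the matrices x := 1 + 2a and y := 1 + 2b are invertible in the ring of n×n matrices over ℤ₂, and every entry of the matrix x·y·x⁻¹·y⁻¹ − (1 + 4(ab − ba)) lies in 8ℤ₂. In other words, the commutator x y x⁻¹ y⁻¹ is congruent mod 8 to 1 + 4[a, b], where [a, b] = ab − ba is the matrix Lie bracket. (Lemma 2.2.1(b) instantiated at G = GL_n over ℤ₂: the image of a commutator of two elements of Ker(GL_n(ℤ₂) → GL_n(𝔽₂)) in Ker(GL_n(ℤ/8ℤ) → GL_n(ℤ/4ℤ)) = 𝔤𝔩_n(𝔽₂) is the Lie bracket of their reductions mod 4.) -/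
/-- Let `n ≥ 1` and let `a, b` be `n×n` matrices over `ℤ₂`. Then
`x := 1 + 2a` and `y := 1 + 2b` are invertible in the ring of `n×n` matrices over `ℤ₂`,
and every entry of `x·y·x⁻¹·y⁻¹ − (1 + 4(ab − ba))` is divisible by `8`: the commutator
`x y x⁻¹ y⁻¹` is congruent mod `8` to `1 + 4[a, b]`, where `[a, b] = ab − ba`. -/
theorem stmt6 (n : ℕ) (hn : 1 ≤ n) (a b : Matrix (Fin n) (Fin n) ℤ_[2]) :
    IsUnit ((1 : Matrix (Fin n) (Fin n) ℤ_[2]) + (2 : ℤ_[2]) • a) ∧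
    IsUnit ((1 : Matrix (Fin n) (Fin n) ℤ_[2]) + (2 : ℤ_[2]) • b) ∧
    ∀ i j : Fin n,
      (8 : ℤ_[2]) ∣
        ((((1 : Matrix (Fin n) (Fin n) ℤ_[2]) + (2 : ℤ_[2]) • a) *
            ((1 : Matrix (Fin n) (Fin n) ℤ_[2]) + (2 : ℤ_[2]) • b) *
            Ring.inverse ((1 : Matrix (Fin n) (Fin n) ℤ_[2]) + (2 : ℤ_[2]) • a) *
            Ring.inverse ((1 : Matrix (Fin n) (Fin n) ℤ_[2]) + (2 : ℤ_[2]) • b)) -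
          ((1 : Matrix (Fin n) (Fin n) ℤ_[2]) + (4 : ℤ_[2]) • (a * b - b * a))) i j := by
  have key : ∀ m : Matrix (Fin n) (Fin n) ℤ_[2],
      IsUnit ((1 : Matrix (Fin n) (Fin n) ℤ_[2]) + (2 : ℤ_[2]) • m) := by
    intro m
    rw [Matrix.isUnit_iff_isUnit_det]
    rw [← IsLocalRing.notMem_maximalIdeal, ← PadicInt.ker_toZMod, RingHom.mem_ker]
    have : (PadicInt.toZMod : ℤ_[2] →+* ZMod 2) ((1 + (2:ℤ_[2]) • m).det)
        = ((1 + (2:ℤ_[2]) • m).map PadicInt.toZMod).det :=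
      RingHom.map_det _ _
    rw [this]
    have h2 : ((1 + (2:ℤ_[2]) • m).map PadicInt.toZMod)
        = (1 : Matrix (Fin n) (Fin n) (ZMod 2)) := by
      ext i j
      simp [Matrix.map_apply, Matrix.add_apply, Matrix.one_apply, Matrix.smul_apply,
        smul_eq_mul, map_ofNat]
      exact Or.inl (by decide)
    rw [h2]
    simp
  refine ⟨key a, key b, ?_⟩
  set x := (1 : Matrix (Fin n) (Fin n) ℤ_[2]) + (2:ℤ_[2]) • a with hxdef
  set y := (1 : Matrix (Fin n) (Fin n) ℤ_[2]) + (2:ℤ_[2]) • b with hydef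
  have hx := key a
  have hy := key b
  set X := Ring.inverse x with hXdef
  set Y := Ring.inverse y with hYdef
  have hXx : X * x = 1 := Ring.inverse_mul_cancel _ hx
  have hYy : Y * y = 1 := Ring.inverse_mul_cancel _ hy
  set c : Matrix (Fin n) (Fin n) ℤ_[2] :=
    (a*b - b*a) * (a + b + (2:ℤ_[2]) • (b*a)) with hcdef
  have hE : x * y * X * Y - (1 + (4:ℤ_[2]) • (a*b - b*a)) = (8:ℤ_[2]) • (-(c * X * Y)) := by
    have hu : IsUnit (y * x) := hy.mul hx
    refine hu.mul_right_cancel ?_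
    have hY' : Y * (y * x) = x := by rw [← mul_assoc, hYy, one_mul]
    have h1 : x * y * X * Y * (y * x) = x * y := by
      rw [mul_assoc (x*y*X) Y (y*x), hY', mul_assoc (x*y) X x, hXx, mul_one]
    have h2 : ((8:ℤ_[2]) • (-(c * X * Y))) * (y * x) = (8:ℤ_[2]) • (-c) := by
      rw [smul_mul_assoc, neg_mul, mul_assoc (c*X) Y (y*x), hY', mul_assoc c X x, hXx, mul_one]
    rw [sub_mul, h1, h2, hxdef, hydef, hcdef]
    simp only [Algebra.smul_def, map_ofNat]
    noncomm_ring
  intro i j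
  rw [hE]
  exact ⟨-(c * X * Y) i j, rfl⟩
end
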